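/- When the lean-consensus algorithm is run in a hybrid-scheduled uniprocessor system with a quantum of at least 8 operations, every process decides after executing at most 12 operations (i.e., within 3 rounds). -/

import Mathlib

/-- Local state of a process executing the lean-consensus algorithm.  `pc ∈ {0,1,2,3}`
is the index of the next operation within the current round: `0` = read `a_0[r]`,
`1` = read `a_1[r]`, `2` = write `1` to `a_p[r]`, `3` = read `a_{1-p}[r-1]` (deciding `p`
if it is `0`).  `pref` is the current preference, `round` the current round number,
`firstRead` the value read from `a_0[r]` at `pc = 0`, and `decided` records the decision
value once the process has decided (after which it takes no further steps). -/
structure ProcState where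
  pc : ℕ
  pref : Bool
  round : ℕ
  firstRead : Bool
  decided : Option Bool
  deriving DecidableEq

/-- A global configuration of the lean-consensus algorithm: the contents of the two
register arrays (`reg b r` is the register `a_b[r]`, where bit `false` stands for `0` and
`true` for `1`) together with the local state of each of the `N` processes. -/
structure Config (N : ℕ) where
  reg : Bool → ℕ → Bool
  proc : Fin N → ProcState

/-- The initial configuration: `a_0[0] = a_1[0] = 1`, all other registers `0`, and every
process at the first operation of round `1`, preferring its input bit. -/
def initConfig (N : ℕ) (input : Fin N → Bool) : Config N where
  reg := fun _ r => r == 0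
  proc := fun i => ⟨0, input i, 1, false, none⟩

/-- One atomic operation of a single process of the lean-consensus algorithm: given the
current register contents and the process's local state, return its new local state
together with `some (b, r)` if the operation writes `1` to register `a_b[r]` (and `none`
for a read).  A decided process does nothing. -/
def procStep (reg : Bool → ℕ → Bool) (s : ProcState) : ProcState × Option (Bool × ℕ) :=
  if s.decided ≠ none then (s, none)
  else if s.pc = 0 then ({ s with pc := 1, firstRead := reg false s.round }, none)
  else if s.pc = 1 then
    let v0 := s.firstRead
    let v1 := reg true s.round
    let p := if v0 = true ∧ v1 = false then false
             else if v1 = true ∧ v0 = false then true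
             else s.pref
    ({ s with pc := 2, pref := p }, none)
  else if s.pc = 2 then ({ s with pc := 3 }, some (s.pref, s.round))
  else if reg (!s.pref) (s.round - 1) = false then
    ({ s with decided := some s.pref }, none)
  else ({ s with pc := 0, round := s.round + 1 }, none)

/-- The global transition: process `i` performs its next atomic operation (interleaving
semantics). -/
def step {N : ℕ} (c : Config N) (i : Fin N) : Config N :=
  let r := procStep c.reg (c.proc i)
  { reg := fun b k => match r.2 with
      | some w => if b = w.1 ∧ k = w.2 then true else c.reg b k
      | none => c.reg b k
    proc := Function.update c.proc i r.1 }

/-- `run input sched t` is the configuration reached after the first `t` steps of the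
execution of lean-consensus from inputs `input` in which the process `sched s` performs
the `s`-th atomic operation. -/
def run {N : ℕ} (input : Fin N → Bool) (sched : ℕ → Fin N) : ℕ → Config N
  | 0 => initConfig N input
  | t + 1 => step (run input sched t) (sched t)

/-- `segLen sched t` is the number of consecutive steps up to and including step `t` that
have been performed by the process `sched t` (the length of the current run segment of
the uniprocessor schedule). -/
def segLen {N : ℕ} (sched : ℕ → Fin N) : ℕ → ℕ
  | 0 => 1
  | t + 1 => if sched (t + 1) = sched t then segLen sched t + 1 else 1

/-- `HybridSchedule input sched prio Q q0` says that the uniprocessor schedule `sched`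
obeys hybrid quantum/priority-based scheduling for the execution of lean-consensus from
inputs `input`: whenever the running process is pre-empted (another process is scheduled
while it still has operations remaining, i.e. it is undecided), the pre-empting process
has strictly higher priority, or it has equal priority and the pre-empted process has
completed its quantum — `Q` consecutive operations since it was scheduled, except that
the process running at time `0` may have consumed part of its quantum on other work
before starting the protocol and is vulnerable already after `q0 ≤ Q` consecutive
operations. -/
def HybridSchedule {N : ℕ} (input : Fin N → Bool) (sched : ℕ → Fin N)
    (prio : Fin N → ℕ) (Q q0 : ℕ) : Prop :=
  ∀ t : ℕ, sched (t + 1) ≠ sched t →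
    ((run input sched (t + 1)).proc (sched t)).decided = none →
    (prio (sched t) < prio (sched (t + 1)) ∨
      (prio (sched t) = prio (sched (t + 1)) ∧
        (if t + 1 = segLen sched t then q0 else Q) ≤ segLen sched t))

/-!
Let `w` be the time of the first write to a round-`2` register. A process that has performed
seven operations has already written in round `2`, so before `w` no process has used up a
quantum of `Q ≥ 7` operations and none has decided. Hence up to `w` priorities never decrease along the schedule and
every pre-emption is by a process of strictly higher priority, except possibly that of the
process running at time `0`; either way a pre-empted process does not run again before `w`.

So the first writer of a value `b` in round `1`, which read `a_{1-b}[1] = 0`, finishes its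
round without interruption, and the two values are not both written in round `1` before `w`.
If both values were written in round `2`, the first writer of the later one would have read
both round-`2` registers as `0`, hence before `w`, while holding a preference already written in
round `1`; the writer at `w` also wrote its value in round `1`, so both values would be in
round `1` before `w`. Finally, a process performing twelve operations without deciding writes
its preference `p` in round `3`, hence `a_p[2] = 1`, and then reads `a_{1-p}[2] = 1`.
-/

namespace LeanConsensus

/-- The preference adopted after reading `v0 = a_0[r]` and `v1 = a_1[r]` with preference `p`. -/
def readPref (v0 v1 p : Bool) : Bool :=
  if v0 = true ∧ v1 = false then false else if v1 = true ∧ v0 = false then true else p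

theorem readPref_eq_or (v0 v1 p : Bool) :
    readPref v0 v1 p = p ∨ (readPref v0 v1 p = false ∧ v0 = true) ∨
      (readPref v0 v1 p = true ∧ v1 = true) := by
  cases v0 <;> cases v1 <;> cases p <;> simp [readPref]

/-- A process that ends up preferring `b` although it read `a_b[r] = 0` also read
`a_{!b}[r] = 0` and kept its preference. -/
theorem readPref_eq_of_read_own_eq_false {v0 v1 p b : Bool} (h : readPref v0 v1 p = b)
    (hown : cond b v1 v0 = false) : cond b v0 v1 = false ∧ p = b := by
  subst h
  cases v0 <;> cases v1 <;> cases p <;> simp_all [readPref]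

section ProcStep

variable {reg : Bool → ℕ → Bool} {s : ProcState}

theorem procStep_of_decided_ne_none (h : s.decided ≠ none) : procStep reg s = (s, none) := by
  simp [procStep, h]

theorem procStep_of_pc_eq_zero (h : s.decided = none) (h0 : s.pc = 0) :
    procStep reg s = ({ s with pc := 1, firstRead := reg false s.round }, none) := by
  simp [procStep, h, h0]

theorem procStep_of_pc_eq_one (h : s.decided = none) (h1 : s.pc = 1) :
    procStep reg s =
      ({ s with pc := 2, pref := readPref s.firstRead (reg true s.round) s.pref }, none) := by
  simp [procStep, h, h1, readPref]

theorem procStep_of_pc_eq_two (h : s.decided = none) (h2 : s.pc = 2) :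
    procStep reg s = ({ s with pc := 3 }, some (s.pref, s.round)) := by
  simp [procStep, h, h2]

theorem procStep_of_pc_eq_three_of_false (h : s.decided = none) (h3 : s.pc = 3)
    (hr : reg (!s.pref) (s.round - 1) = false) :
    procStep reg s = ({ s with decided := some s.pref }, none) := by
  simp [procStep, h, h3, hr]

theorem procStep_of_pc_eq_three_of_true (h : s.decided = none) (h3 : s.pc = 3)
    (hr : reg (!s.pref) (s.round - 1) = true) :
    procStep reg s = ({ s with pc := 0, round := s.round + 1 }, none) := by
  simp [procStep, h, h3, hr]

theorem procStep_snd :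
    (procStep reg s).2 =
      if s.decided = none ∧ s.pc = 2 then some (s.pref, s.round) else none := by
  unfold procStep
  split_ifs <;> simp_all

theorem four_mul_round_add_pc_procStep (h : s.decided = none) (hpc : s.pc ≤ 3)
    (h' : (procStep reg s).1.decided = none) :
    4 * (procStep reg s).1.round + (procStep reg s).1.pc = 4 * s.round + s.pc + 1 ∧
      (procStep reg s).1.pc ≤ 3 := by
  unfold procStep at h' ⊢
  split_ifs at h' ⊢ <;> simp_all
  omega

theorem procStep_decided_eq_none_of_pc_lt_three (h : s.decided = none) (hpc : s.pc < 3) :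
    (procStep reg s).1.decided = none := by
  unfold procStep
  split_ifs <;> simp_all
  omega

theorem procStep_decided_eq_none_iff (h : s.decided = none) (h3 : s.pc = 3) :
    (procStep reg s).1.decided = none ↔ reg (!s.pref) (s.round - 1) = true := by
  cases hr : reg (!s.pref) (s.round - 1)
  · simp [procStep_of_pc_eq_three_of_false h h3 hr]
  · simp [procStep_of_pc_eq_three_of_true h h3 hr, h]

end ProcStep

structure ProcInv (reg : Bool → ℕ → Bool) (s : ProcState) : Prop where
  pc_le_three : s.pc ≤ 3
  firstRead_written :
    s.decided = none → s.pc = 1 → s.firstRead = true → reg false s.round = true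
  prev_round_written :
    s.decided = none → 2 ≤ s.round → s.pc ≤ 1 → reg s.pref (s.round - 1) = true
  prev_or_cur_round_written : s.decided = none → s.pc = 2 → 2 ≤ s.round →
    reg s.pref (s.round - 1) = true ∨ reg s.pref s.round = true
  cur_round_written : s.decided = none → s.pc = 3 → reg s.pref s.round = true

namespace ProcInv

variable {reg reg' : Bool → ℕ → Bool} {s : ProcState}

theorem mono (h : ProcInv reg s) (hmono : ∀ b k, reg b k = true → reg' b k = true) :
    ProcInv reg' s where
  pc_le_three := h.pc_le_three
  firstRead_written hd hpc hf := hmono _ _ (h.firstRead_written hd hpc hf)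
  prev_round_written hd hr hpc := hmono _ _ (h.prev_round_written hd hr hpc)
  prev_or_cur_round_written hd hpc hr :=
    (h.prev_or_cur_round_written hd hpc hr).imp (hmono _ _) (hmono _ _)
  cur_round_written hd hpc := hmono _ _ (h.cur_round_written hd hpc)

theorem procStep (h : ProcInv reg s) (hmono : ∀ b k, reg b k = true → reg' b k = true)
    (hwrite : s.decided = none → s.pc = 2 → reg' s.pref s.round = true) :
    ProcInv reg' (procStep reg s).1 := by
  by_cases hd : s.decided = none
  swap
  · rw [procStep_of_decided_ne_none hd]
    exact h.mono hmono
  obtain hpc | hpc | hpc | hpc : s.pc = 0 ∨ s.pc = 1 ∨ s.pc = 2 ∨ s.pc = 3 := by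
    have := h.pc_le_three
    omega
  · rw [procStep_of_pc_eq_zero hd hpc]
    refine ⟨by simp, fun _ _ hf => hmono _ _ hf, ?_, by simp, by simp⟩
    exact fun _ hr _ => hmono _ _ (h.prev_round_written hd hr (by omega))
  · rw [procStep_of_pc_eq_one hd hpc]
    refine ⟨by simp, by simp, by simp, fun _ _ hr => ?_, by simp⟩
    dsimp only
    rcases readPref_eq_or s.firstRead (reg true s.round) s.pref with
      hp | ⟨hp, hf⟩ | ⟨hp, hv⟩ <;> rw [hp]
    · exact .inl (hmono _ _ (h.prev_round_written hd hr (by omega)))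
    · exact .inr (hmono _ _ (h.firstRead_written hd hpc hf))
    · exact .inr (hmono _ _ hv)
  · rw [procStep_of_pc_eq_two hd hpc]
    exact ⟨by simp, by simp, by simp, by simp, fun _ _ => hwrite hd hpc⟩
  · cases hr : reg (!s.pref) (s.round - 1)
    · rw [procStep_of_pc_eq_three_of_false hd hpc hr]
      exact ⟨by simp [hpc], by simp, by simp, by simp, by simp⟩
    · rw [procStep_of_pc_eq_three_of_true hd hpc hr]
      refine ⟨by simp, by simp, fun _ _ _ => ?_, by simp, by simp⟩
      simpa using hmono _ _ (h.cur_round_written hd hpc)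

end ProcInv

section Run

variable {N : ℕ} (input : Fin N → Bool) (sched : ℕ → Fin N)

def opCount (j : Fin N) (t : ℕ) : ℕ := ((Finset.range t).filter fun s => sched s = j).card

def WritesAt (s : ℕ) (b : Bool) (r : ℕ) : Prop :=
  ((run input sched s).proc (sched s)).decided = none ∧
    ((run input sched s).proc (sched s)).pc = 2 ∧
    ((run input sched s).proc (sched s)).round = r ∧
    ((run input sched s).proc (sched s)).pref = b

def BeforeRoundTwo (w : ℕ) : Prop := ∀ s < w, ∀ b, ¬ WritesAt input sched s b 2

variable {input sched}

theorem WritesAt.eq {s : ℕ} {b b' : Bool} {r r' : ℕ} (h : WritesAt input sched s b r)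
    (h' : WritesAt input sched s b' r') : b = b' ∧ r = r' :=
  ⟨h.2.2.2.symm.trans h'.2.2.2, h.2.2.1.symm.trans h'.2.2.1⟩

theorem proc_run_succ_of_eq {j : Fin N} {t : ℕ} (h : sched t = j) :
    (run input sched (t + 1)).proc j =
      (procStep (run input sched t).reg ((run input sched t).proc j)).1 := by
  subst h
  simp [run, step]

theorem proc_run_succ_of_ne {j : Fin N} {t : ℕ} (h : sched t ≠ j) :
    (run input sched (t + 1)).proc j = (run input sched t).proc j := by
  simp [run, step, Function.update_of_ne (Ne.symm h)]

theorem reg_run_succ_iff (t : ℕ) (b : Bool) (k : ℕ) :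
    (run input sched (t + 1)).reg b k = true ↔
      (run input sched t).reg b k = true ∨ WritesAt input sched t b k := by
  simp only [run, step, procStep_snd, WritesAt]
  split_ifs <;> grind

theorem reg_run_zero (b : Bool) (t : ℕ) : (run input sched t).reg b 0 = true := by
  induction t with
  | zero => simp [run, initConfig]
  | succ t ih => exact (reg_run_succ_iff t b 0).2 (.inl ih)

theorem reg_run_mono {b : Bool} {r t t' : ℕ} (h : t ≤ t')
    (hr : (run input sched t).reg b r = true) : (run input sched t').reg b r = true := by
  induction t', h using Nat.le_induction with
  | base => exact hr
  | succ t' _ ih => exact (reg_run_succ_iff t' b r).2 (.inl ih)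

theorem reg_run_iff {b : Bool} {r : ℕ} (hr : r ≠ 0) (t : ℕ) :
    (run input sched t).reg b r = true ↔ ∃ s < t, WritesAt input sched s b r := by
  induction t with
  | zero => simp [run, initConfig, hr]
  | succ t ih =>
    rw [reg_run_succ_iff, ih]
    constructor
    · rintro (⟨s, hs, hW⟩ | hW)
      exacts [⟨s, by omega, hW⟩, ⟨t, by omega, hW⟩]
    · rintro ⟨s, hs, hW⟩
      obtain hs | rfl := Nat.lt_succ_iff_lt_or_eq.1 hs
      exacts [.inl ⟨s, hs, hW⟩, .inr hW]

theorem procInv_run (t : ℕ) (j : Fin N) :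
    ProcInv (run input sched t).reg ((run input sched t).proc j) := by
  induction t with
  | zero => exact ⟨by simp [run, initConfig], by simp [run, initConfig],
      by simp [run, initConfig], by simp [run, initConfig], by simp [run, initConfig]⟩
  | succ t ih =>
    have hmono : ∀ b k, (run input sched t).reg b k = true →
        (run input sched (t + 1)).reg b k = true :=
      fun b k h => (reg_run_succ_iff t b k).2 (.inl h)
    by_cases hj : sched t = j
    · rw [proc_run_succ_of_eq hj]
      subst hj
      exact ih.procStep hmono fun hd hpc =>
        (reg_run_succ_iff t _ _).2 (.inr ⟨hd, hpc, rfl, rfl⟩)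
    · rw [proc_run_succ_of_ne hj]
      exact ih.mono hmono

theorem reg_run_of_reg_run_succ {b : Bool} {r : ℕ} (t : ℕ)
    (h : (run input sched t).reg b (r + 1) = true) : (run input sched t).reg b r = true := by
  induction t with
  | zero => simp [run, initConfig] at h
  | succ t ih =>
    refine (reg_run_succ_iff t b r).2 (.inl ?_)
    rcases (reg_run_succ_iff t b (r + 1)).1 h with h | ⟨hd, hpc, hr, rfl⟩
    · exact ih h
    · rcases Nat.eq_zero_or_pos r with rfl | hr0
      · exact reg_run_zero _ _
      · have := (procInv_run t (sched t)).prev_or_cur_round_written hd hpc (by omega)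
        rw [hr, Nat.add_sub_cancel] at this
        exact this.elim id ih

theorem opCount_succ (j : Fin N) (t : ℕ) :
    opCount sched j (t + 1) = opCount sched j t + if sched t = j then 1 else 0 := by
  unfold opCount
  rw [Finset.range_add_one, Finset.filter_insert]
  split_ifs
  · rw [Finset.card_insert_of_notMem (by simp)]
  · rfl

theorem opCount_mono (j : Fin N) {t t' : ℕ} (h : t ≤ t') :
    opCount sched j t ≤ opCount sched j t' :=
  Finset.card_le_card (Finset.filter_subset_filter _ (Finset.range_mono h))

theorem opCount_lt_of_lt {j : Fin N} {s t : ℕ} (hst : s < t) (hj : sched s = j) :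
    opCount sched j s < opCount sched j t := by
  have := opCount_mono (sched := sched) j (Nat.succ_le_of_lt hst)
  rw [opCount_succ, if_pos hj] at this
  omega

theorem exists_opCount_eq {j : Fin N} {k t : ℕ} (h : k < opCount sched j t) :
    ∃ s < t, sched s = j ∧ opCount sched j s = k := by
  induction t with
  | zero => simp [opCount] at h
  | succ t ih =>
    rw [opCount_succ] at h
    by_cases hk : k < opCount sched j t
    · obtain ⟨s, hs, hsj, hsk⟩ := ih hk
      exact ⟨s, by omega, hsj, hsk⟩
    · split_ifs at h with hj
      · exact ⟨t, by omega, hj, by omega⟩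
      · omega

theorem proc_run_eq_of_opCount_eq {j : Fin N} {a b : ℕ} (hab : a ≤ b)
    (h : opCount sched j a = opCount sched j b) :
    (run input sched b).proc j = (run input sched a).proc j := by
  induction b, hab using Nat.le_induction with
  | base => rfl
  | succ b hab ih =>
    have hb := opCount_mono (sched := sched) j hab
    have hb' := opCount_succ (sched := sched) j b
    split_ifs at hb' with hj
    · omega
    · rw [proc_run_succ_of_ne hj, ih (by omega)]

theorem decided_ne_none_mono {j : Fin N} {t t' : ℕ} (h : t ≤ t')
    (hd : ((run input sched t).proc j).decided ≠ none) :
    ((run input sched t').proc j).decided ≠ none := by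
  induction t', h using Nat.le_induction with
  | base => exact hd
  | succ t' _ ih =>
    by_cases hj : sched t' = j
    · rwa [proc_run_succ_of_eq hj, procStep_of_decided_ne_none ih]
    · rwa [proc_run_succ_of_ne hj]

theorem decided_eq_none_antitone {j : Fin N} {t t' : ℕ} (h : t ≤ t')
    (hd : ((run input sched t').proc j).decided = none) :
    ((run input sched t).proc j).decided = none :=
  not_not.1 fun hne => decided_ne_none_mono h hne hd

theorem round_and_pc_of_decided_eq_none {j : Fin N} {t : ℕ}
    (h : ((run input sched t).proc j).decided = none) :
    ((run input sched t).proc j).round = opCount sched j t / 4 + 1 ∧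
      ((run input sched t).proc j).pc = opCount sched j t % 4 := by
  induction t with
  | zero => simp [run, initConfig, opCount]
  | succ t ih =>
    rw [opCount_succ]
    by_cases hj : sched t = j
    · have hd := decided_eq_none_antitone (Nat.le_succ t) h
      rw [proc_run_succ_of_eq hj] at h ⊢
      obtain ⟨hr, hpc⟩ := ih hd
      have := four_mul_round_add_pc_procStep (reg := (run input sched t).reg) hd (by omega) h
      rw [if_pos hj]
      omega
    · rw [proc_run_succ_of_ne hj] at h ⊢
      rw [if_neg hj, Nat.add_zero]
      exact ih h

theorem exists_prev_op {j : Fin N} {k t : ℕ} (h : opCount sched j t = k + 1)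
    (hd : ((run input sched t).proc j).decided = none) :
    ∃ s < t, sched s = j ∧ opCount sched j s = k ∧
      ((run input sched s).proc j).decided = none ∧
      (run input sched t).proc j =
        (procStep (run input sched s).reg ((run input sched s).proc j)).1 := by
  obtain ⟨s, hst, hj, hk⟩ := exists_opCount_eq (k := k) (by omega : k < opCount sched j t)
  have hcount : opCount sched j (s + 1) = opCount sched j t := by
    rw [opCount_succ, if_pos hj, hk, h]
  refine ⟨s, hst, hj, hk, decided_eq_none_antitone hst.le hd, ?_⟩
  rw [proc_run_eq_of_opCount_eq hst hcount, proc_run_succ_of_eq hj]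

theorem opCount_of_writesAt {s : ℕ} {b : Bool} {r : ℕ} (h : WritesAt input sched s b r) :
    opCount sched (sched s) s = 4 * (r - 1) + 2 ∧ 1 ≤ r := by
  obtain ⟨hd, hpc, hr, -⟩ := h
  have := round_and_pc_of_decided_eq_none hd
  omega

theorem eq_of_writesAt_of_sched_eq {s s' : ℕ} {b b' : Bool} {r : ℕ}
    (h : WritesAt input sched s b r) (h' : WritesAt input sched s' b' r)
    (hj : sched s = sched s') : s = s' := by
  have hc := (opCount_of_writesAt h).1
  have hc' := (opCount_of_writesAt h').1
  rw [← hj] at hc'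
  rcases lt_trichotomy s s' with hlt | heq | hgt
  · have := opCount_lt_of_lt (sched := sched) hlt rfl
    omega
  · exact heq
  · have := opCount_lt_of_lt hgt hj.symm
    omega

theorem exists_writesAt_of_lt_opCount {j : Fin N} {r t : ℕ}
    (hd : ((run input sched t).proc j).decided = none) (h : 4 * r + 2 < opCount sched j t) :
    ∃ s < t, ∃ b, WritesAt input sched s b (r + 1) := by
  obtain ⟨s, hst, rfl, hk⟩ := exists_opCount_eq h
  have hds := decided_eq_none_antitone hst.le hd
  have := round_and_pc_of_decided_eq_none hds
  exact ⟨s, hst, _, hds, by omega, by omega, rfl⟩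

theorem exists_writesAt_two_of_decided {j : Fin N} {t : ℕ}
    (hd : ((run input sched t).proc j).decided = none)
    (hd' : ((run input sched (t + 1)).proc j).decided ≠ none) :
    ∃ s < t, ∃ b, WritesAt input sched s b 2 := by
  have hj : sched t = j := by
    by_contra hj
    exact hd' (by rwa [proc_run_succ_of_ne hj])
  rw [proc_run_succ_of_eq hj] at hd'
  have hpos := round_and_pc_of_decided_eq_none hd
  have h3 : ((run input sched t).proc j).pc = 3 := by
    by_contra h3
    exact hd' (procStep_decided_eq_none_of_pc_lt_three hd (by omega))
  have hread := mt (procStep_decided_eq_none_iff hd h3).2 hd'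
  have hround : ((run input sched t).proc j).round ≠ 1 := fun h1 =>
    hread (by rw [h1]; exact reg_run_zero _ _)
  exact exists_writesAt_of_lt_opCount (r := 1) hd (by omega)

theorem exists_view_of_first_writesAt {w : ℕ} {b : Bool} {r : ℕ}
    (hw : WritesAt input sched w b r) (hfirst : ∀ s < w, ¬ WritesAt input sched s b r) :
    ∃ t < w, sched t = sched w ∧ (run input sched t).reg b (r - 1) = true ∧
      (run input sched t).reg (!b) r = false := by
  obtain ⟨hc, hr1⟩ := opCount_of_writesAt hw
  obtain ⟨hd, -, -, hb⟩ := hw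
  obtain ⟨t1, ht1, hj1, hc1, hd1, hstep1⟩ := exists_prev_op (k := 4 * (r - 1) + 1) hc hd
  obtain ⟨t0, ht0, hj0, hc0, hd0, hstep0⟩ := exists_prev_op (k := 4 * (r - 1)) hc1 hd1
  have hpos1 := round_and_pc_of_decided_eq_none hd1
  have hpos0 := round_and_pc_of_decided_eq_none hd0
  rw [procStep_of_pc_eq_one hd1 (by omega)] at hstep1
  rw [procStep_of_pc_eq_zero hd0 (by omega)] at hstep0
  have hr0 : ((run input sched t0).proc (sched w)).round = r := by omega
  have hpref : readPref ((run input sched t0).reg false r) ((run input sched t1).reg true r)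
      ((run input sched t0).proc (sched w)).pref = b := by
    rw [← hb, hstep1, hstep0]
    simp only [hr0]
  have hnot : ∀ t < w, (run input sched t).reg b r = false := fun t ht => by
    by_contra h
    obtain ⟨s, hs, hW⟩ := (reg_run_iff (by omega : r ≠ 0) t).1 (by simpa using h)
    exact hfirst s (by omega) hW
  have hown :
      cond b ((run input sched t1).reg true r) ((run input sched t0).reg false r) = false := by
    cases b
    · exact hnot t0 (by omega)
    · exact hnot t1 ht1
  obtain ⟨hother, hp⟩ := readPref_eq_of_read_own_eq_false hpref hown
  refine ⟨t0, by omega, hj0, ?_, ?_⟩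
  · rcases Nat.lt_or_ge r 2 with hr | hr
    · rw [show r - 1 = 0 by omega]
      exact reg_run_zero _ _
    · have := (procInv_run t0 (sched w)).prev_round_written hd0 (by omega) (by omega)
      rwa [hp, hr0] at this
  · cases b
    · by_contra h
      simp [reg_run_mono ht0.le (by simpa using h)] at hother
    · exact hother

theorem segLen_le_opCount (t : ℕ) : segLen sched t ≤ opCount sched (sched t) (t + 1) := by
  induction t with
  | zero =>
    rw [opCount_succ, if_pos rfl]
    simp [segLen]
  | succ t ih =>
    rw [segLen, opCount_succ, if_pos rfl]
    split_ifs with h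
    · rw [h]
      omega
    · omega

theorem sched_zero_eq_of_segLen_eq {t : ℕ} (h : segLen sched t = t + 1) : sched 0 = sched t := by
  induction t with
  | zero => rfl
  | succ t ih =>
    rw [segLen] at h
    split_ifs at h with hs
    · rw [ih (by omega), hs]
    · omega

namespace BeforeRoundTwo

variable {w : ℕ} {prio : Fin N → ℕ} {Q q0 : ℕ}

theorem decided_eq_none (hw : BeforeRoundTwo input sched w) {u : ℕ} (hu : u ≤ w + 1)
    (j : Fin N) : ((run input sched u).proc j).decided = none := by
  induction u with
  | zero => simp [run, initConfig]
  | succ u ih =>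
    by_contra hd
    obtain ⟨s, hs, b, hW⟩ := exists_writesAt_two_of_decided (ih (by omega)) hd
    exact hw s (by omega) b hW

theorem opCount_lt (hw : BeforeRoundTwo input sched w) {v : ℕ} (hv : v ≤ w) (j : Fin N) :
    opCount sched j v < 7 := by
  by_contra h
  obtain ⟨s, hs, b, hW⟩ :=
    exists_writesAt_of_lt_opCount (r := 1) (hw.decided_eq_none (u := v) (by omega) j) (by omega)
  exact hw s (by omega) b hW

theorem prio_mono (hw : BeforeRoundTwo input sched w)
    (hsched : HybridSchedule input sched prio Q q0) {a b : ℕ} (hab : a ≤ b) (hb : b ≤ w + 1) :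
    prio (sched a) ≤ prio (sched b) := by
  induction b, hab using Nat.le_induction with
  | base => exact le_rfl
  | succ b _ ih =>
    refine (ih (by omega)).trans ?_
    by_cases hne : sched (b + 1) = sched b
    · rw [hne]
    · rcases hsched b hne (hw.decided_eq_none hb _) with hlt | ⟨heq, -⟩
      exacts [hlt.le, heq.le]

/-- No process completes a quantum before round two, so only the process running at time `0`
can be pre-empted by one of equal priority. -/
theorem prio_lt_or_sched_zero_eq (hw : BeforeRoundTwo input sched w)
    (hsched : HybridSchedule input sched prio Q q0) (hQ : 7 ≤ Q) {t : ℕ} (ht : t + 1 ≤ w)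
    (hne : sched (t + 1) ≠ sched t) :
    prio (sched t) < prio (sched (t + 1)) ∨ sched 0 = sched t := by
  rcases hsched t hne (hw.decided_eq_none (by omega) _) with hlt | ⟨-, hquantum⟩
  · exact .inl hlt
  · split_ifs at hquantum with hinit
    · exact .inr (sched_zero_eq_of_segLen_eq hinit.symm)
    · have := (segLen_le_opCount (sched := sched) t).trans_lt (hw.opCount_lt ht _)
      omega

theorem sched_ne_of_preempted (hw : BeforeRoundTwo input sched w)
    (hsched : HybridSchedule input sched prio Q q0) (hQ : 7 ≤ Q) {j : Fin N} {u y : ℕ}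
    (hu : sched u = j) (hpre : sched (u + 1) ≠ j) (huy : u + 1 ≤ y) (hy : y ≤ w) :
    sched y ≠ j := by
  induction y, huy using Nat.le_induction with
  | base => exact hpre
  | succ y hy' ih =>
    intro hj
    have hyj := ih (by omega)
    have h1 := hw.prio_mono hsched (by omega : u ≤ u + 1) (by omega : u + 1 ≤ w + 1)
    have h2 := hw.prio_mono hsched hy' (by omega : y ≤ w + 1)
    have h3 := hw.prio_mono hsched (by omega : y ≤ y + 1) (by omega : y + 1 ≤ w + 1)
    have hu' := hw.prio_lt_or_sched_zero_eq hsched hQ (by omega : u + 1 ≤ w) (hu ▸ hpre)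
    have hy'' := hw.prio_lt_or_sched_zero_eq hsched hQ (by omega : y + 1 ≤ w) (hj ▸ Ne.symm hyj)
    rw [hu] at h1 hu'
    rw [hj] at h3 hy''
    exact hyj ((hy''.resolve_left (by omega)).symm.trans (hu'.resolve_left (by omega)))

theorem sched_eq_of_le_of_le (hw : BeforeRoundTwo input sched w)
    (hsched : HybridSchedule input sched prio Q q0) (hQ : 7 ≤ Q) {j : Fin N} {s x s' : ℕ}
    (hsx : s ≤ x) (hxs : x ≤ s') (hs' : s' ≤ w) (hj : sched s = j) (hj' : sched s' = j) :
    sched x = j := by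
  induction x, hsx using Nat.le_induction with
  | base => exact hj
  | succ x _ ih =>
    by_contra hne
    exact hw.sched_ne_of_preempted hsched hQ (ih (by omega)) hne hxs hs' hj'


theorem not_writesAt_one_before_first_writesAt (hw : BeforeRoundTwo input sched w)
    (hsched : HybridSchedule input sched prio Q q0) (hQ : 7 ≤ Q) {v f : ℕ} {b : Bool}
    (hv : v ≤ w) (hWv : WritesAt input sched v b 1)
    (hfirst : ∀ s < v, ¬ WritesAt input sched s b 1) (hf : f < v)
    (hWf : WritesAt input sched f (!b) 1) : False := by
  obtain ⟨t, htv, hjt, -, hread⟩ := exists_view_of_first_writesAt hWv hfirst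
  have htf : t ≤ f := by
    by_contra h
    have := (reg_run_iff one_ne_zero t).2 ⟨f, by omega, hWf⟩
    simp [hread] at this
  have hjf := hw.sched_eq_of_le_of_le hsched hQ htf hf.le hv hjt rfl
  exact hf.ne (eq_of_writesAt_of_sched_eq hWf hWv hjf)

theorem round_one_unanimous (hw : BeforeRoundTwo input sched w)
    (hsched : HybridSchedule input sched prio Q q0) (hQ : 7 ≤ Q) {s s' : ℕ} {b : Bool}
    (hs : s < w) (hWs : WritesAt input sched s b 1) (hs' : s' < w)
    (hWs' : WritesAt input sched s' (!b) 1) : False := by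
  classical
  have hb : ∃ v, WritesAt input sched v b 1 := ⟨s, hWs⟩
  have hb' : ∃ v, WritesAt input sched v (!b) 1 := ⟨s', hWs'⟩
  have hv := Nat.find_min' hb hWs
  have hv' := Nat.find_min' hb' hWs'
  rcases lt_trichotomy (Nat.find hb) (Nat.find hb') with hlt | heq | hgt
  · exact hw.not_writesAt_one_before_first_writesAt hsched hQ (by omega) (Nat.find_spec hb')
      (fun _ => Nat.find_min hb') hlt (by simpa using Nat.find_spec hb)
  · have := ((Nat.find_spec hb).eq (heq ▸ Nat.find_spec hb')).1
    simp at this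
  · exact hw.not_writesAt_one_before_first_writesAt hsched hQ (by omega) (Nat.find_spec hb)
      (fun _ => Nat.find_min hb) hgt (Nat.find_spec hb')

end BeforeRoundTwo

variable {prio : Fin N → ℕ} {Q q0 : ℕ}

theorem round_two_unanimous (hsched : HybridSchedule input sched prio Q q0) (hQ : 7 ≤ Q)
    {t : ℕ} {b : Bool} (h : (run input sched t).reg b 2 = true)
    (h' : (run input sched t).reg (!b) 2 = true) : False := by
  classical
  obtain ⟨s, -, hW⟩ := (reg_run_iff two_ne_zero t).1 h
  obtain ⟨s', -, hW'⟩ := (reg_run_iff two_ne_zero t).1 h'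
  have hex : ∃ w c, WritesAt input sched w c 2 := ⟨s, b, hW⟩
  obtain ⟨c, hWc⟩ := Nat.find_spec hex
  set w := Nat.find hex
  have hw : BeforeRoundTwo input sched w := fun u hu c hWu => Nat.find_min hex hu ⟨c, hWu⟩
  have hex' : ∃ v, WritesAt input sched v (!c) 2 := by
    cases b <;> cases c
    exacts [⟨s', hW'⟩, ⟨s, hW⟩, ⟨s, hW⟩, ⟨s', hW'⟩]
  have hv := Nat.find_spec hex'
  obtain ⟨t0, ht0, -, hprev, hread⟩ :=
    exists_view_of_first_writesAt hv fun _ => Nat.find_min hex'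
  rw [Bool.not_not] at hread
  have ht0w : t0 ≤ w := by
    by_contra hlt
    have := (reg_run_iff two_ne_zero t0).2 ⟨w, by omega, hWc⟩
    simp [hread] at this
  obtain ⟨s1, hs1, hW1⟩ := (reg_run_iff one_ne_zero t0).1 hprev
  have hc2 := (reg_run_iff two_ne_zero (w + 1)).2 ⟨w, w.lt_succ_self, hWc⟩
  obtain ⟨s2, hs2, hW2⟩ := (reg_run_iff one_ne_zero (w + 1)).1 (reg_run_of_reg_run_succ _ hc2)
  have hs2w : s2 ≠ w := fun h => absurd (hW2.eq (h ▸ hWc)).2 (by norm_num)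
  exact hw.round_one_unanimous hsched hQ (by omega) hW2 (by omega) hW1

end Run

end LeanConsensus

open LeanConsensus

theorem hybrid_termination_general {N : ℕ} (input : Fin N → Bool) (sched : ℕ → Fin N)
    (prio : Fin N → ℕ) (Q q0 : ℕ) (hQ : 8 ≤ Q)
    (hsched : HybridSchedule input sched prio Q q0)
    (i : Fin N) (t : ℕ)
    (h12 : 12 ≤ ((Finset.range t).filter fun s => sched s = i).card) :
    ((run input sched t).proc i).decided ≠ none := by
  intro hd
  have h11 : 11 < opCount sched i t := h12
  obtain ⟨s, hst, rfl, hs⟩ := exists_opCount_eq h11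
  have hds := decided_eq_none_antitone hst.le hd
  have hnext := decided_eq_none_antitone hst hd
  have hpos := round_and_pc_of_decided_eq_none hds
  have hr : ((run input sched s).proc (sched s)).round = 3 := by omega
  have hpc : ((run input sched s).proc (sched s)).pc = 3 := by omega
  rw [proc_run_succ_of_eq rfl] at hnext
  have hother := (procStep_decided_eq_none_iff hds hpc).1 hnext
  have hown := (procInv_run s (sched s)).cur_round_written hds hpc
  rw [hr] at hother hown
  exact round_two_unanimous hsched (by omega) (reg_run_of_reg_run_succ s hown) hother

/-- When lean-consensus is run on a hybrid-scheduled uniprocessor with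
a quantum of at least `8` operations, every process decides after executing at most `12`
operations: any process that has taken at least `12` steps has decided. -/
theorem hybrid_termination {N : ℕ} (input : Fin N → Bool) (sched : ℕ → Fin N)
    (prio : Fin N → ℕ) (Q q0 : ℕ) (hQ : 8 ≤ Q) (hq0 : q0 ≤ Q)
    (hsched : HybridSchedule input sched prio Q q0)
    (i : Fin N) (t : ℕ)
    (h12 : 12 ≤ ((Finset.range t).filter fun s => sched s = i).card) :
    ((run input sched t).proc i).decided ≠ none :=
  hybrid_termination_general input sched prio Q q0 hQ hsched i t h12
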